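/- arXiv:0801.2078 — 3 statements merged into one kernel-verified Lean document; each statement's English description precedes it below -/
import Mathlib

section
/- For every nonnegative integer n and every real z, J_n(z) = (1/π) ∫_0^π cos(nα − z·sin α) dα, i.e., the power-series Bessel function agrees with Bessel's integral representation. -/
/-!
Expand `exp (i (n α - z sin α)) = exp (i n α) * ∑ₖ (-i z sin α)ᵏ / k!` and integrate term by term
over `[0, π]`; dominated convergence applies with the bound `|z|ᵏ / k!`. Since
`-i z sin α = (z / 2) (e^{-iα} - e^{iα})`, the binomial theorem writes the real part of the `k`-th
term as a combination of `cos ((n + 2j - k) α)`, `0 ≤ j ≤ k`, and such a cosine integrates to zero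
over `[0, π]` unless `n + 2j = k`. Only `k = n + 2m`, `j = m` survive, giving the `m`-th term of
the power series of `J_n` times `π`.
-/

noncomputable def besselJ (n : ℕ) (z : ℝ) : ℝ :=
  ∑' m : ℕ, (-1 : ℝ) ^ m / (m.factorial * (m + n).factorial) * (z / 2) ^ (2 * m + n)

open Complex Finset Nat

theorem integral_cos_int_mul (c : ℤ) :
    ∫ α in (0 : ℝ)..Real.pi, Real.cos (c * α) = if c = 0 then Real.pi else 0 := by
  split_ifs with hc
  · simp [hc]
  · have hc' : (c : ℝ) ≠ 0 := Int.cast_ne_zero.mpr hc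
    simp [intervalIntegral.integral_comp_mul_left _ hc', Real.sin_int_mul_pi]

theorem exp_neg_sub_exp_pow_mul_exp (x : ℂ) (n k : ℕ) :
    (exp (-x) - exp x) ^ k * exp (n * x) =
      ∑ j ∈ range (k + 1), (-1) ^ j * k.choose j * exp ((((n : ℤ) + 2 * j - k : ℤ) : ℂ) * x) := by
  rw [sub_eq_neg_add, add_pow, sum_mul]
  refine sum_congr rfl fun j hj => ?_
  have hjk : j ≤ k := Nat.lt_succ_iff.mp (mem_range.mp hj)
  rw [neg_pow, ← exp_nat_mul, ← exp_nat_mul]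
  calc _ = (-1) ^ j * k.choose j * (exp (j * x) * exp ((k - j : ℕ) * -x) * exp (n * x)) := by ring
    _ = _ := by
      rw [← exp_add, ← exp_add]
      congr 2
      push_cast [Nat.cast_sub hjk]
      ring

theorem neg_mul_sin_mul_I (t x : ℂ) :
    -(t * sin x) * I = t / 2 * (exp (-(x * I)) - exp (x * I)) := by
  have h := two_sin x
  rw [neg_mul] at h
  linear_combination (-t * I / 2) * h - t / 2 * (exp (-(x * I)) - exp (x * I)) * I_sq

noncomputable def besselIntegrandTerm (n : ℕ) (z : ℝ) (k : ℕ) (α : ℝ) : ℂ :=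
  (-(z * Real.sin α : ℝ) * I) ^ k / k ! * exp ((n * α : ℝ) * I)

section
variable (n : ℕ) (z : ℝ)

theorem continuous_besselIntegrandTerm (k : ℕ) : Continuous (besselIntegrandTerm n z k) := by
  unfold besselIntegrandTerm; fun_prop

theorem hasSum_re_besselIntegrandTerm (α : ℝ) :
    HasSum (fun k => (besselIntegrandTerm n z k α).re) (Real.cos (n * α - z * Real.sin α)) := by
  have h : HasSum (fun k => besselIntegrandTerm n z k α)
      (exp (-(z * Real.sin α : ℝ) * I) * exp ((n * α : ℝ) * I)) := by
    unfold besselIntegrandTerm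
    rw [exp_eq_exp_ℂ]
    exact (NormedSpace.expSeries_div_hasSum_exp (-(z * Real.sin α : ℝ) * I : ℂ)).mul_right _
  rw [← exp_add, ← add_mul, ← ofReal_neg, ← ofReal_add, neg_add_eq_sub] at h
  simpa only [exp_ofReal_mul_I_re] using hasSum_re h

theorem norm_besselIntegrandTerm_le (k : ℕ) (α : ℝ) :
    ‖besselIntegrandTerm n z k α‖ ≤ |z| ^ k / k ! := by
  have hsin : |z * Real.sin α| ≤ |z| := by
    rw [abs_mul]; exact mul_le_of_le_one_right (abs_nonneg z) (Real.abs_sin_le_one α)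
  rw [besselIntegrandTerm, norm_mul, norm_exp_ofReal_mul_I, mul_one, norm_div, norm_pow,
    norm_mul, norm_I, mul_one, norm_neg, norm_real, Real.norm_eq_abs, norm_natCast]
  gcongr

theorem hasSum_integral_re_besselIntegrandTerm :
    HasSum (fun k => ∫ α in (0 : ℝ)..Real.pi, (besselIntegrandTerm n z k α).re)
      (∫ α in (0 : ℝ)..Real.pi, Real.cos (n * α - z * Real.sin α)) := by
  refine intervalIntegral.hasSum_integral_of_dominated_convergence
    (fun k _ => |z| ^ k / k !) (fun k => ?_) (fun k => ?_) ?_ intervalIntegrable_const ?_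
  · exact (continuous_re.comp (continuous_besselIntegrandTerm n z k)).aestronglyMeasurable
  · exact .of_forall fun α _ => (abs_re_le_norm _).trans (norm_besselIntegrandTerm_le n z k α)
  · exact .of_forall fun α _ => Real.summable_pow_div_factorial |z|
  · exact .of_forall fun α _ => hasSum_re_besselIntegrandTerm n z α

noncomputable def besselCoeff (z : ℝ) (k j : ℕ) : ℝ := (-1) ^ j * k.choose j * (z / 2) ^ k / k !

theorem re_besselIntegrandTerm (k : ℕ) (α : ℝ) :
    (besselIntegrandTerm n z k α).re =
      ∑ j ∈ range (k + 1), besselCoeff z k j * Real.cos (((n : ℤ) + 2 * j - k : ℤ) * α) := by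
  have hsin := neg_mul_sin_mul_I z α
  rw [← ofReal_sin, ← ofReal_mul] at hsin
  have hterm : besselIntegrandTerm n z k α =
      (z / 2) ^ k / k ! * ((exp (-(α * I)) - exp (α * I)) ^ k * exp (n * (α * I))) := by
    rw [besselIntegrandTerm, hsin, mul_pow, ofReal_mul, ofReal_natCast, mul_assoc (n : ℂ)]
    ring
  rw [hterm, exp_neg_sub_exp_pow_mul_exp, mul_sum, re_sum]
  refine sum_congr rfl fun j _ => ?_
  have hcoeff : (z / 2 : ℂ) ^ k / k ! * ((-1) ^ j * k.choose j) = besselCoeff z k j := by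
    push_cast [besselCoeff]; ring
  rw [← mul_assoc, hcoeff, ← ofReal_intCast, ← mul_assoc, ← ofReal_mul, re_ofReal_mul,
    exp_ofReal_mul_I_re]

theorem integral_re_besselIntegrandTerm (k : ℕ) :
    ∫ α in (0 : ℝ)..Real.pi, (besselIntegrandTerm n z k α).re =
      Real.pi * ∑ j ∈ range (k + 1), if n + 2 * j = k then besselCoeff z k j else 0 := by
  simp_rw [re_besselIntegrandTerm]
  rw [intervalIntegral.integral_finsetSum
    fun j _ => (by fun_prop : Continuous _).intervalIntegrable _ _, mul_sum]
  refine sum_congr rfl fun j _ => ?_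
  have hfreq : ((n : ℤ) + 2 * j - k = 0) ↔ n + 2 * j = k := by omega
  rw [intervalIntegral.integral_const_mul, integral_cos_int_mul]
  simp only [hfreq]
  split_ifs <;> ring

theorem besselCoeff_add_two_mul (m : ℕ) :
    besselCoeff z (n + 2 * m) m = (-1) ^ m / (m ! * (m + n) !) * (z / 2) ^ (2 * m + n) := by
  have hchoose : ((n + 2 * m).choose m : ℝ) * m ! * (m + n) ! = (n + 2 * m) ! := by
    have := Nat.choose_mul_factorial_mul_factorial (show m ≤ n + 2 * m by omega)
    rw [show n + 2 * m - m = m + n by omega] at this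
    exact_mod_cast this
  have hchoose_ne : ((n + 2 * m).choose m : ℝ) ≠ 0 := by
    exact_mod_cast (Nat.choose_pos (by omega)).ne'
  rw [besselCoeff, ← hchoose, show 2 * m + n = n + 2 * m by ring]
  field_simp

theorem integral_re_besselIntegrandTerm_add_two_mul (m : ℕ) :
    ∫ α in (0 : ℝ)..Real.pi, (besselIntegrandTerm n z (n + 2 * m) α).re =
      Real.pi * ((-1) ^ m / (m ! * (m + n) !) * (z / 2) ^ (2 * m + n)) := by
  rw [integral_re_besselIntegrandTerm, sum_eq_single_of_mem m (mem_range.mpr (by omega))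
    fun j _ hj => if_neg (by omega), if_pos rfl, besselCoeff_add_two_mul]

theorem integral_re_besselIntegrandTerm_eq_zero {k : ℕ} (hk : ∀ m, n + 2 * m ≠ k) :
    ∫ α in (0 : ℝ)..Real.pi, (besselIntegrandTerm n z k α).re = 0 := by
  rw [integral_re_besselIntegrandTerm, sum_eq_zero fun j _ => if_neg (hk j), mul_zero]

end

theorem besselJ_integral_rep (n : ℕ) (z : ℝ) :
    besselJ n z = (1 / Real.pi) * ∫ α in (0 : ℝ)..Real.pi, Real.cos (n * α - z * Real.sin α) := by
  have hinj : Function.Injective fun m : ℕ => n + 2 * m := fun a b h => by simpa using h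
  have h := (hinj.hasSum_iff fun k hk => integral_re_besselIntegrandTerm_eq_zero n z
    fun m hm => hk ⟨m, hm⟩).mpr (hasSum_integral_re_besselIntegrandTerm n z)
  simp only [Function.comp_def, integral_re_besselIntegrandTerm_add_two_mul] at h
  have h' := h.mul_left Real.pi⁻¹
  simp only [inv_mul_cancel_left₀ Real.pi_ne_zero] at h'
  rw [besselJ, h'.tsum_eq, one_div]
end

section
/- Define f(z) = Σ_{n=1}^∞ 4n·J_n(z)². Then f is differentiable on (0,∞) and f'(z) = 2z·(J_0(z)² + J_1(z)²) for all z > 0. -/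
/-!
Reindexing the power series gives `J_{n+2} = -∑ₘ m/(m+n+1) · aₙₘ`, where `aₙₘ` is the
`m`-th term of `J_n`; comparing coefficients then yields both `2 J_{n+1}' = J_n - J_{n+2}` and
`z (J_n + J_{n+2}) = 2(n+1) J_{n+1}`. Together they turn the derivative of `4(n+1) J_{n+1}²` into
`2z (J_n² - J_{n+2}²)`, which telescopes to `2z (J_0² + J_1²)`. Term-by-term differentiation is
justified by the bound `J_n(y)² ≤ e^{R²/2} (R²/4)ⁿ / n!` for `|y| ≤ R`.
-/

open Nat

noncomputable def besselJTerm (n m : ℕ) (z : ℝ) : ℝ :=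
  (-1 : ℝ) ^ m / (m ! * (m + n)!) * (z / 2) ^ (2 * m + n)

theorem besselJ_eq_tsum (n : ℕ) (z : ℝ) : besselJ n z = ∑' m, besselJTerm n m z := rfl

theorem hasDerivAt_besselJTerm_succ (n m : ℕ) (z : ℝ) :
    HasDerivAt (besselJTerm (n + 1) m)
      ((2 * m + n + 1) / (2 * (m + n + 1)) * besselJTerm n m z) z := by
  have h := (((hasDerivAt_id z).div_const 2).pow (2 * m + n + 1)).const_mul
    ((-1 : ℝ) ^ m / (m ! * (m + n + 1)!))
  refine h.congr_deriv ?_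
  unfold besselJTerm
  simp only [factorial_succ, id, Nat.add_sub_cancel]
  push_cast
  field_simp

theorem besselJTerm_add_two (n m : ℕ) (z : ℝ) :
    besselJTerm (n + 2) m z = -(((m : ℝ) + 1) / (m + n + 2)) * besselJTerm n (m + 1) z := by
  unfold besselJTerm
  rw [show 2 * (m + 1) + n = 2 * m + (n + 2) by ring, show m + (n + 2) = m + 1 + n + 1 by ring]
  simp only [factorial_succ, pow_succ]
  push_cast
  field_simp
  ring

theorem mul_besselJTerm (n m : ℕ) (z : ℝ) :
    z * besselJTerm n m z = 2 * ((m : ℝ) + n + 1) * besselJTerm (n + 1) m z := by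
  unfold besselJTerm
  rw [show m + (n + 1) = m + n + 1 by ring, show 2 * m + (n + 1) = 2 * m + n + 1 by ring]
  simp only [factorial_succ, pow_succ]
  push_cast
  field_simp

theorem abs_besselJTerm_le (n m : ℕ) {y R : ℝ} (hy : |y| ≤ R) :
    |besselJTerm n m y| ≤ (R / 2) ^ n / n ! * (((R / 2) ^ 2) ^ m / m !) := by
  have hR : 0 ≤ R := (abs_nonneg y).trans hy
  have hfac : (m ! * n ! : ℝ) ≤ m ! * (m + n)! := by
    gcongr
    exact le_add_self
  calc |besselJTerm n m y| = (|y| / 2) ^ (2 * m + n) / (m ! * (m + n)!) := by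
        simp [besselJTerm, abs_mul, div_eq_inv_mul, mul_comm]
    _ ≤ (R / 2) ^ (2 * m + n) / (m ! * n !) := by gcongr
    _ = (R / 2) ^ n / n ! * (((R / 2) ^ 2) ^ m / m !) := by
        rw [← pow_mul, pow_add]; field_simp

theorem summable_mul_besselJTerm (n : ℕ) (z : ℝ) {c : ℕ → ℝ} (hc : ∀ m, |c m| ≤ 1) :
    Summable fun m => c m * besselJTerm n m z :=
  .of_norm_bounded ((Real.summable_pow_div_factorial _).mul_left _) fun m => by
    rw [Real.norm_eq_abs, abs_mul]
    exact (mul_le_of_le_one_left (abs_nonneg _) (hc m)).trans (abs_besselJTerm_le n m le_rfl)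

theorem summable_besselJTerm (n : ℕ) (z : ℝ) : Summable fun m => besselJTerm n m z := by
  simpa using summable_mul_besselJTerm n z (c := fun _ => 1) (by simp)

theorem summable_ratio_mul_besselJTerm (n : ℕ) (z : ℝ) :
    Summable fun m : ℕ => (m : ℝ) / (m + n + 1) * besselJTerm n m z :=
  summable_mul_besselJTerm n z fun m => by
    rw [abs_of_nonneg (by positivity)]
    exact div_le_one_of_le₀ (by linarith) (by positivity)

theorem besselJ_add_two (n : ℕ) (z : ℝ) :
    besselJ (n + 2) z = -∑' m : ℕ, (m : ℝ) / (m + n + 1) * besselJTerm n m z := by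
  rw [(summable_ratio_mul_besselJTerm n z).tsum_eq_zero_add, besselJ_eq_tsum]
  simp only [besselJTerm_add_two, CharP.cast_eq_zero, zero_div, zero_mul, zero_add, ← tsum_neg]
  push_cast
  refine tsum_congr fun m => ?_
  ring

theorem hasDerivAt_besselJ_succ (n : ℕ) (z : ℝ) :
    HasDerivAt (besselJ (n + 1)) ((besselJ n z - besselJ (n + 2) z) / 2) z := by
  set R := |z| + 1
  have hzR : z ∈ Metric.ball (0 : ℝ) R := by simp [R]
  have hc : ∀ m : ℕ, |((2 * m + n + 1) / (2 * (m + n + 1)) : ℝ)| ≤ 1 := fun m => by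
    rw [abs_of_nonneg (by positivity)]
    exact div_le_one_of_le₀ (by linarith) (by positivity)
  have hderiv := hasDerivAt_tsum_of_isPreconnected (g := fun m => besselJTerm (n + 1) m)
    (g' := fun m y => (2 * m + n + 1) / (2 * (m + n + 1)) * besselJTerm n m y)
    ((Real.summable_pow_div_factorial ((R / 2) ^ 2)).mul_left ((R / 2) ^ n / n !))
    Metric.isOpen_ball (convex_ball 0 R).isPreconnected
    (fun m y _ => hasDerivAt_besselJTerm_succ n m y)
    (fun m y hy => by
      rw [Real.norm_eq_abs, abs_mul]
      refine (mul_le_of_le_one_left (abs_nonneg _) (hc m)).trans (abs_besselJTerm_le n m ?_)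
      simpa using (mem_ball_zero_iff.mp hy).le)
    hzR (summable_besselJTerm (n + 1) z) hzR
  have hval : (besselJ n z - besselJ (n + 2) z) / 2 =
      ∑' m : ℕ, (2 * m + n + 1) / (2 * (m + n + 1)) * besselJTerm n m z := by
    rw [besselJ_add_two, sub_neg_eq_add, besselJ_eq_tsum,
      ← (summable_besselJTerm n z).tsum_add (summable_ratio_mul_besselJTerm n z),
      ← tsum_div_const]
    refine tsum_congr fun m => ?_
    field_simp
    ring
  rw [hval]
  exact hderiv

theorem mul_besselJ_add_besselJ_add_two (n : ℕ) (z : ℝ) :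
    z * (besselJ n z + besselJ (n + 2) z) = 2 * (n + 1) * besselJ (n + 1) z :=
  calc z * (besselJ n z + besselJ (n + 2) z)
      = ∑' m : ℕ, (n + 1) / (m + n + 1) * (z * besselJTerm n m z) := by
        rw [besselJ_add_two, ← sub_eq_add_neg, besselJ_eq_tsum,
          ← (summable_besselJTerm n z).tsum_sub (summable_ratio_mul_besselJTerm n z),
          ← tsum_mul_left]
        refine tsum_congr fun m => ?_
        field_simp
        ring
    _ = ∑' m : ℕ, 2 * (n + 1) * besselJTerm (n + 1) m z := by
        refine tsum_congr fun m => ?_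
        rw [mul_besselJTerm]
        field_simp
    _ = 2 * (n + 1) * besselJ (n + 1) z := tsum_mul_left

theorem abs_besselJ_le (n : ℕ) {y R : ℝ} (hy : |y| ≤ R) :
    |besselJ n y| ≤ (R / 2) ^ n / n ! * Real.exp ((R / 2) ^ 2) := by
  have hexp := (NormedSpace.expSeries_div_hasSum_exp ((R / 2) ^ 2)).mul_left ((R / 2) ^ n / n !)
  rw [← Real.exp_eq_exp_ℝ] at hexp
  exact tsum_of_norm_bounded hexp fun m => (Real.norm_eq_abs _).trans_le (abs_besselJTerm_le n m hy)

theorem sq_besselJ_le (n : ℕ) {y R : ℝ} (hy : |y| ≤ R) :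
    besselJ n y ^ 2 ≤ Real.exp ((R / 2) ^ 2) ^ 2 * (((R / 2) ^ 2) ^ n / n !) :=
  calc besselJ n y ^ 2 ≤ ((R / 2) ^ n / n ! * Real.exp ((R / 2) ^ 2)) ^ 2 :=
        sq_le_sq' (abs_le.mp (abs_besselJ_le n hy)).1 (abs_le.mp (abs_besselJ_le n hy)).2
    _ = Real.exp ((R / 2) ^ 2) ^ 2 * (((R / 2) ^ 2) ^ n / n ! ^ 2) := by
        rw [← pow_mul, mul_comm 2 n, pow_mul]
        ring
    _ ≤ Real.exp ((R / 2) ^ 2) ^ 2 * (((R / 2) ^ 2) ^ n / n !) := by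
        gcongr
        exact le_self_pow₀ (by exact_mod_cast factorial_pos n) two_ne_zero

theorem summable_sq_besselJ (z : ℝ) : Summable fun n => besselJ n z ^ 2 :=
  .of_nonneg_of_le (fun _ => sq_nonneg _) (fun n => sq_besselJ_le n le_rfl)
    ((Real.summable_pow_div_factorial _).mul_left _)

theorem besselJ_succ_zero (n : ℕ) : besselJ (n + 1) 0 = 0 := by
  simp [besselJ]

theorem tsum_sq_besselJ_sub_sq_besselJ_add_two (z : ℝ) :
    ∑' n, (besselJ n z ^ 2 - besselJ (n + 2) z ^ 2) = besselJ 0 z ^ 2 + besselJ 1 z ^ 2 := by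
  have hs := summable_sq_besselJ z
  rw [hs.tsum_sub ((summable_nat_add_iff 2).mpr hs), ← hs.sum_add_tsum_nat_add 2]
  simp [Finset.sum_range_succ]

theorem hasDerivAt_four_mul_sq_besselJ_succ (n : ℕ) (y : ℝ) :
    HasDerivAt (fun w => 4 * ((n : ℝ) + 1) * besselJ (n + 1) w ^ 2)
      (2 * y * (besselJ n y ^ 2 - besselJ (n + 2) y ^ 2)) y := by
  refine (((hasDerivAt_besselJ_succ n y).pow 2).const_mul _).congr_deriv ?_
  linear_combination (-2) * (besselJ n y - besselJ (n + 2) y) * mul_besselJ_add_besselJ_add_two n y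

theorem deriv_sum_4n_besselJ_sq_general (z : ℝ) :
    HasDerivAt (fun w => ∑' n : ℕ, 4 * ((n : ℝ) + 1) * besselJ (n + 1) w ^ 2)
      (2 * z * (besselJ 0 z ^ 2 + besselJ 1 z ^ 2)) z := by
  set R := |z| + 1
  set b : ℕ → ℝ := fun n => Real.exp ((R / 2) ^ 2) ^ 2 * (((R / 2) ^ 2) ^ n / n !)
  have hb : Summable b := (Real.summable_pow_div_factorial _).mul_left _
  have hbound : ∀ n, ∀ y ∈ Metric.ball (0 : ℝ) R,
      ‖2 * y * (besselJ n y ^ 2 - besselJ (n + 2) y ^ 2)‖ ≤ 2 * R * (b n + b (n + 2)) := by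
    intro n y hy
    have hyR : |y| ≤ R := by simpa using (mem_ball_zero_iff.mp hy).le
    rw [Real.norm_eq_abs, abs_mul, abs_mul, abs_two]
    gcongr
    exact (abs_sub _ _).trans (by
      simpa using add_le_add (sq_besselJ_le n hyR) (sq_besselJ_le (n + 2) hyR))
  have hderiv := hasDerivAt_tsum_of_isPreconnected
    ((hb.add ((summable_nat_add_iff 2).mpr hb)).mul_left (2 * R))
    Metric.isOpen_ball (convex_ball 0 R).isPreconnected
    (fun n y _ => hasDerivAt_four_mul_sq_besselJ_succ n y) hbound
    (Metric.mem_ball_self (by positivity)) (by simp [besselJ_succ_zero])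
    (by simp [R] : z ∈ Metric.ball (0 : ℝ) R)
  rwa [tsum_mul_left, tsum_sq_besselJ_sub_sq_besselJ_add_two] at hderiv

theorem deriv_sum_4n_besselJ_sq (z : ℝ) (hz : 0 < z) :
    HasDerivAt (fun w => ∑' n : ℕ, 4 * ((n : ℝ) + 1) * besselJ (n + 1) w ^ 2)
      (2 * z * (besselJ 0 z ^ 2 + besselJ 1 z ^ 2)) z :=
  deriv_sum_4n_besselJ_sq_general z
end

section
/- Let h : ℝ → ℂ be 2π-periodic, extend to a bounded holomorphic function on the strip D = {x + iy : x ∈ ℝ, |y| < a} for some a > 0, with M = sup_D |h|. Then for every positive integer N, |(1/N)·Σ_{j=0}^{N−1} h(2πj/N) − (1/(2π))·∫_0^{2π} h(φ) dφ| ≤ 2M/(e^{aN} − 1). -/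
/-!
Expand `h` restricted to `ℝ` in its Fourier series `∑ cₙ e^{inx}`. Shifting the contour of
`cₙ = (2π)⁻¹ ∫ h(x) e^{-inx} dx` to `Im z = ∓b` (the vertical sides cancel by periodicity) gives
`|cₙ| ≤ M e^{-b|n|}` for every `b < a`, hence `|cₙ| ≤ M e^{-a|n|}`. The `N`-point rule sums the
characters `e^{inx}` to `0` unless `N ∣ n`, so it returns `∑ₘ c_{Nm}`; its error is
`∑_{m ≠ 0} c_{Nm}`, of norm at most `2M ∑_{k ≥ 1} e^{-aNk} = 2M / (e^{aN} - 1)`.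
-/

open Complex Set Finset Filter Topology
open scoped Real Interval

theorem integral_eq_integral_add_mul_I_of_periodic {E : Type*} [NormedAddCommGroup E]
    [NormedSpace ℂ E] {g : ℂ → E} {T t : ℝ}
    (hg : DifferentiableOn ℂ g ([[0, T]] ×ℂ [[0, t]]))
    (hper : ∀ y ∈ [[0, t]], g (T + y * I) = g (y * I)) :
    ∫ x in (0 : ℝ)..T, g x = ∫ x in (0 : ℝ)..T, g (x + t * I) := by
  have hrect := integral_boundary_rect_eq_zero_of_differentiableOn g 0 ⟨T, t⟩ (by simpa using hg)
  have hvert : ∫ y in (0 : ℝ)..t, g (T + y * I) = ∫ y in (0 : ℝ)..t, g (y * I) :=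
    intervalIntegral.integral_congr hper
  simp only [zero_re, zero_im, ofReal_zero, zero_mul, add_zero, zero_add, hvert] at hrect
  rw [← sub_eq_zero, ← hrect]
  abel

instance Real.fact_zero_lt_two_pi : Fact (0 < 2 * π) := ⟨Real.two_pi_pos⟩

theorem fourierCoeff_eq_integral_exp {f : AddCircle (2 * π) → ℂ} {h : ℝ → ℂ}
    (hf : ∀ x : ℝ, f x = h x) (n : ℤ) :
    fourierCoeff f n = (2 * π)⁻¹ • ∫ x in (0 : ℝ)..2 * π, exp (-(n * x * I)) * h x := by
  rw [fourierCoeff_eq_intervalIntegral f n 0, zero_add, one_div]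
  congr 1
  refine intervalIntegral.integral_congr fun x _ => ?_
  rw [smul_eq_mul, fourier_coe_apply, hf]
  congr 2
  field_simp
  push_cast
  ring

section Strip

variable {a M : ℝ} {h : ℂ → ℂ}

theorem norm_integral_exp_mul_le_of_strip (hhol : DifferentiableOn ℂ h {w : ℂ | |w.im| < a})
    (hper : ∀ w : ℂ, |w.im| < a → h (w + 2 * π) = h w)
    (hbnd : ∀ w : ℂ, |w.im| < a → ‖h w‖ ≤ M) {b : ℝ} (hb0 : 0 ≤ b) (hb : b < a) (n : ℤ) :
    ‖∫ x in (0 : ℝ)..2 * π, exp (-(n * x * I)) * h x‖ ≤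
      2 * π * (M * Real.exp (-b) ^ n.natAbs) := by
  -- the side of the real axis on which `e^{-inz}` decays
  obtain ⟨t, ht, hnt⟩ : ∃ t : ℝ, |t| ≤ b ∧ n * t = n.natAbs * -b := by
    rw [Nat.cast_natAbs, Int.cast_abs]
    rcases le_total 0 n with hn | hn
    · exact ⟨-b, by rw [abs_neg, abs_of_nonneg hb0], by rw [abs_of_nonneg (by exact_mod_cast hn)]⟩
    · exact ⟨b, (abs_of_nonneg hb0).le, by rw [abs_of_nonpos (by exact_mod_cast hn)]; ring⟩
  have hstrip : ∀ y ∈ [[0, t]], ∀ x : ℝ, |(x + y * I).im| < a := fun y hy x => by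
    simpa using (abs_sub_left_of_mem_uIcc hy).trans_lt (by simpa using ht.trans_lt hb)
  set g : ℂ → ℂ := fun z => exp (-(n * z * I)) * h z
  have hshift : ∫ x in (0 : ℝ)..2 * π, g x = ∫ x in (0 : ℝ)..2 * π, g (x + t * I) := by
    refine integral_eq_integral_add_mul_I_of_periodic ?_ fun y hy => ?_
    · refine (by fun_prop : Differentiable ℂ fun z : ℂ => exp (-(n * z * I))).differentiableOn.mul
        (hhol.mono fun z hz => ?_)
      rw [mem_reProdIm] at hz
      simpa using hstrip z.im hz.2 z.re
    · have hexp : exp (-(n * (y * I + 2 * π) * I)) = exp (-(n * (y * I) * I)) := by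
        rw [← mul_one (exp (-(n * (y * I) * I))), ← exp_int_mul_two_pi_mul_I (-n), ← exp_add]
        congr 1
        push_cast
        ring
      simp only [g, ofReal_mul, ofReal_ofNat, hexp, add_comm _ (y * I : ℂ)]
      rw [hper _ (by simpa using hstrip y hy 0)]
  have hbound : ∀ x ∈ Ι (0 : ℝ) (2 * π), ‖g (x + t * I)‖ ≤ M * Real.exp (-b) ^ n.natAbs := by
    intro x _
    have hre : (-(n * (x + t * I) * I)).re = n * t := by simp
    rw [norm_mul, norm_exp, hre, hnt, Real.exp_nat_mul, mul_comm]
    exact mul_le_mul_of_nonneg_right (hbnd _ (by simpa using hstrip t right_mem_uIcc x))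
      (by positivity)
  calc ‖∫ x in (0 : ℝ)..2 * π, g x‖ = ‖∫ x in (0 : ℝ)..2 * π, g (x + t * I)‖ := by rw [hshift]
    _ ≤ M * Real.exp (-b) ^ n.natAbs * |2 * π - 0| :=
      intervalIntegral.norm_integral_le_of_norm_le_const hbound
    _ = 2 * π * (M * Real.exp (-b) ^ n.natAbs) := by
      rw [sub_zero, abs_of_pos Real.two_pi_pos, mul_comm]

theorem norm_fourierCoeff_le_of_strip (ha : 0 < a)
    (hhol : DifferentiableOn ℂ h {w : ℂ | |w.im| < a})
    (hper : ∀ w : ℂ, |w.im| < a → h (w + 2 * π) = h w)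
    (hbnd : ∀ w : ℂ, |w.im| < a → ‖h w‖ ≤ M) {f : AddCircle (2 * π) → ℂ}
    (hf : ∀ x : ℝ, f x = h x) (n : ℤ) :
    ‖fourierCoeff f n‖ ≤ M * Real.exp (-a) ^ n.natAbs := by
  have hlt : ∀ b ∈ Ioo 0 a, ‖fourierCoeff f n‖ ≤ M * Real.exp (-b) ^ n.natAbs := by
    intro b hb
    rw [fourierCoeff_eq_integral_exp hf, norm_smul, norm_inv,
      Real.norm_of_nonneg Real.two_pi_pos.le, inv_mul_le_iff₀ Real.two_pi_pos]
    exact norm_integral_exp_mul_le_of_strip hhol hper hbnd hb.1.le hb.2 n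
  have hcont : Continuous fun b : ℝ => M * Real.exp (-b) ^ n.natAbs := by fun_prop
  exact ge_of_tendsto (hcont.tendsto a |>.mono_left nhdsWithin_le_nhds)
    (eventually_of_mem (Ioo_mem_nhdsLT ha) hlt)

end Strip

section Geometric

variable {r : ℝ}

theorem hasSum_pow_natAbs (hr0 : 0 ≤ r) (hr1 : r < 1) :
    HasSum (fun m : ℤ => r ^ m.natAbs) ((1 + r) / (1 - r)) := by
  have hgeo := hasSum_geometric_of_lt_one hr0 hr1
  have hneg : HasSum (fun k : ℕ => r ^ (-((k : ℤ) + 1)).natAbs) (r * (1 - r)⁻¹) := by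
    simpa only [Int.natAbs_neg, ← Nat.cast_succ, Int.natAbs_natCast, pow_succ'] using
      hgeo.mul_left r
  convert HasSum.of_nat_of_neg_add_one (f := fun m : ℤ => r ^ m.natAbs)
    (by simpa only [Int.natAbs_natCast] using hgeo) hneg using 1
  field_simp [(sub_pos.mpr hr1).ne']

theorem norm_sub_le_of_hasSum_of_norm_le_pow_natAbs {E : Type*} [SeminormedAddCommGroup E]
    {c : ℤ → E} {s : E} {C : ℝ} (hs : HasSum c s) (hr0 : 0 ≤ r) (hr1 : r < 1)
    (hc : ∀ m ≠ 0, ‖c m‖ ≤ C * r ^ m.natAbs) :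
    ‖s - c 0‖ ≤ 2 * C * r / (1 - r) := by
  have hs' : HasSum (Function.update c 0 0) (s - c 0) := by
    simpa [sub_eq_neg_add] using hs.update 0 0
  have hbound : HasSum (Function.update (fun m : ℤ => C * r ^ m.natAbs) 0 0)
      (2 * C * r / (1 - r)) := by
    have h := ((hasSum_pow_natAbs hr0 hr1).mul_left C).update 0 0
    have hsum : C * ((1 + r) / (1 - r)) - C = 2 * C * r / (1 - r) := by
      field_simp [(sub_pos.mpr hr1).ne']
      ring
    rwa [Int.natAbs_zero, pow_zero, mul_one, zero_sub, neg_add_eq_sub, hsum] at h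
  refine hs'.norm_le_of_bounded hbound fun m => ?_
  rcases eq_or_ne m 0 with rfl | hm
  · simp
  · simpa [Function.update_of_ne hm] using hc m hm

end Geometric

section Sampling

variable {T : ℝ} [Fact (0 < T)] {N : ℕ}

theorem sum_fourier_mul_natCast_div (hN : N ≠ 0) (n : ℤ) :
    ∑ j ∈ range N, fourier n ((T * j / N : ℝ) : AddCircle T) =
      if (N : ℤ) ∣ n then (N : ℂ) else 0 := by
  have hprim := isPrimitiveRoot_exp N hN
  have hterm : ∀ j : ℕ,
      fourier n ((T * j / N : ℝ) : AddCircle T) = (exp (2 * π * I / N) ^ n) ^ j := fun j => by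
    have hT : (T : ℂ) ≠ 0 := ofReal_ne_zero.mpr (Fact.out : 0 < T).ne'
    have hN' : (N : ℂ) ≠ 0 := Nat.cast_ne_zero.mpr hN
    rw [fourier_coe_apply, ← exp_int_mul, ← exp_nat_mul]
    congr 1
    push_cast
    field_simp
  simp only [hterm]
  split_ifs with hdvd
  · simp [(hprim.zpow_eq_one_iff_dvd n).mpr hdvd]
  · have hζ : exp (2 * π * I / N) ^ n ≠ 1 := fun h => hdvd ((hprim.zpow_eq_one_iff_dvd n).mp h)
    have hζN : (exp (2 * π * I / N) ^ n) ^ N = 1 := by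
      rw [← zpow_natCast, ← zpow_mul, hprim.zpow_eq_one_iff_dvd]
      exact dvd_mul_left _ _
    rw [geom_sum_eq hζ, hζN, sub_self, zero_div]

theorem hasSum_fourierCoeff_natCast_mul {f : C(AddCircle T, ℂ)} (hf : Summable (fourierCoeff f))
    (hN : N ≠ 0) :
    HasSum (fun m : ℤ => fourierCoeff f (N * m))
      ((N : ℂ)⁻¹ * ∑ j ∈ range N, f ((T * j / N : ℝ) : AddCircle T)) := by
  have hsamples := (hasSum_sum (s := range N) fun (j : ℕ) _ =>
    has_pointwise_sum_fourier_series_of_summable hf ((T * j / N : ℝ) : AddCircle T)).mul_left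
      (N : ℂ)⁻¹
  have hN' : (N : ℂ) ≠ 0 := Nat.cast_ne_zero.mpr hN
  simp_rw [smul_eq_mul, ← mul_sum, sum_fourier_mul_natCast_div hN, mul_ite, mul_zero,
    mul_comm (fourierCoeff _ _), inv_mul_cancel_left₀ hN'] at hsamples
  have hsupp : ∀ n ∉ Set.range ((N : ℤ) * ·),
      (if (N : ℤ) ∣ n then fourierCoeff f n else 0) = 0 :=
    fun n hn => if_neg fun ⟨m, hm⟩ => hn ⟨m, hm.symm⟩
  simpa [Function.comp_def] using
    ((mul_right_injective₀ (Nat.cast_ne_zero.mpr hN)).hasSum_iff hsupp).mpr hsamples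

theorem norm_mean_sample_sub_fourierCoeff_zero_le {f : C(AddCircle T, ℂ)} {C r : ℝ}
    (hr0 : 0 ≤ r) (hr1 : r < 1) (hf : ∀ n : ℤ, ‖fourierCoeff f n‖ ≤ C * r ^ n.natAbs)
    (hN : N ≠ 0) :
    ‖(N : ℂ)⁻¹ * ∑ j ∈ range N, f ((T * j / N : ℝ) : AddCircle T) - fourierCoeff f 0‖ ≤
      2 * C * r ^ N / (1 - r ^ N) := by
  have hsummable : Summable (fourierCoeff f) :=
    .of_norm_bounded ((hasSum_pow_natAbs hr0 hr1).summable.mul_left C) hf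
  have haliased : ∀ m ≠ 0, ‖fourierCoeff f (N * m)‖ ≤ C * (r ^ N) ^ m.natAbs := fun m _ => by
    simpa [Int.natAbs_mul, pow_mul] using hf (N * m)
  simpa using norm_sub_le_of_hasSum_of_norm_le_pow_natAbs
    (hasSum_fourierCoeff_natCast_mul hsummable hN) (pow_nonneg hr0 N) (pow_lt_one₀ hr0 hr1 hN)
    haliased

end Sampling

theorem periodic_trapezoidal_rule_error (a M : ℝ) (ha : 0 < a) (h : ℂ → ℂ)
    (hhol : DifferentiableOn ℂ h {w : ℂ | |w.im| < a})
    (hper : ∀ w : ℂ, |w.im| < a → h (w + 2 * Real.pi) = h w)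
    (hbnd : ∀ w : ℂ, |w.im| < a → ‖h w‖ ≤ M)
    (N : ℕ) (hN : 0 < N) :
    ‖(1 / (N : ℂ)) * ∑ j ∈ Finset.range N, h (2 * Real.pi * j / N)
        - (1 / (2 * (Real.pi : ℂ))) * ∫ φ in (0 : ℝ)..(2 * Real.pi), h φ‖
      ≤ 2 * M / (Real.exp (a * N) - 1) := by
  have hreal : ∀ x : ℝ, (x : ℂ) ∈ {w : ℂ | |w.im| < a} := fun x => by simpa using ha
  have hperR : Function.Periodic (fun x : ℝ => h x) (2 * π) := fun x => by
    simpa using hper x (hreal x)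
  let F : C(AddCircle (2 * π), ℂ) := ⟨hperR.lift,
    continuous_coinduced_dom.mpr (hhol.continuousOn.comp_continuous continuous_ofReal hreal)⟩
  have hF : ∀ x : ℝ, F x = h x := hperR.lift_coe
  have herr := norm_mean_sample_sub_fourierCoeff_zero_le (Real.exp_nonneg (-a))
    (Real.exp_lt_one_iff.mpr (neg_lt_zero.mpr ha)) (norm_fourierCoeff_le_of_strip ha hhol hper hbnd hF)
    hN.ne'
  have hc0 : fourierCoeff F 0 = (2 * π : ℂ)⁻¹ * ∫ x in (0 : ℝ)..2 * π, h x := by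
    simpa using fourierCoeff_eq_integral_exp hF 0
  have hexp : Real.exp (-a) ^ N = (Real.exp (a * N))⁻¹ := by
    rw [← Real.exp_nat_mul, ← Real.exp_neg, mul_neg, mul_comm]
  have hexp_gt : 1 < Real.exp (a * N) := Real.one_lt_exp_iff.mpr (by positivity)
  simp only [hF, hc0, hexp] at herr
  convert herr using 1
  · push_cast
    ring_nf
  · field_simp [(sub_pos.mpr hexp_gt).ne']
end
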